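/- Corollary (Jacobi-Stirling triangle of the first kind). Let z be a real number with z > −1. Then the Jacobi-Stirling triangle of the first kind [Jc n k]_{n,k≥0} is totally positive, and for every n ∈ ℕ the Toeplitz matrix 𝒯(c) of the n-th row sequence c k = Jc n k is totally positive. -/

import Mathlib

open Finset

/-- An `ℕ × ℕ` matrix of real numbers is *totally positive* if every minor
taken along strictly increasing row and column indices is nonnegative. -/
def TPReal (A : ℕ → ℕ → ℝ) : Prop :=
  ∀ r : ℕ, 1 ≤ r → ∀ ρ κ : Fin r → ℕ, StrictMono ρ → StrictMono κ →
    0 ≤ (Matrix.of fun i j : Fin r => A (ρ i) (κ j)).det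

/-- The Toeplitz matrix of a sequence: `𝒯(c) i j = c (i - j)` for `i ≥ j`
and `0` otherwise. -/
def toeplitz (c : ℕ → ℝ) : ℕ → ℕ → ℝ :=
  fun i j => if j ≤ i then c (i - j) else 0

/-- The Jacobi-Stirling numbers of the first kind with parameter `z`:
`Jc 0 0 = 1`, `Jc n 0 = Jc 0 n = 0` for `n ≥ 1`, and
`Jc n k = Jc (n-1) (k-1) + (n-1)·(n-1+z)·Jc (n-1) k` for `n, k ≥ 1`. -/
noncomputable def jacobiStirling1 (z : ℝ) : ℕ → ℕ → ℝ
  | 0, 0 => 1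
  | 0, _ + 1 => 0
  | _ + 1, 0 => 0
  | n + 1, k + 1 =>
      jacobiStirling1 z n k + (n : ℝ) * ((n : ℝ) + z) * jacobiStirling1 z n (k + 1)

/-! Write `c i = i (i + z)`, which is `≥ 0` for `z > -1`; row `n` of the triangle lists the
coefficients of `∏ i < n, (x + c i)`. Nonnegativity of minors survives bordering a matrix to
`1 ⊕ M` and the column operations `col k ← a col k + b col (k + 1)` with `a, b ≥ 0` (right
multiplication by a nonnegative bidiagonal matrix). Splitting off the factor `x + c 0` writes the
triangle as `1 ⊕ (triangle of c ∘ succ)` followed by such an operation, and multiplying row `n`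
by `x + c n` is such an operation on its Toeplitz matrix; both claims follow by induction. -/

def TPBelow (K : ℕ) (A : ℕ → ℕ → ℝ) : Prop :=
  ∀ r (ρ κ : Fin r → ℕ), StrictMono ρ → StrictMono κ → (∀ i, ρ i < K) →
    0 ≤ (Matrix.of fun i j => A (ρ i) (κ j)).det

theorem tpBelow_zero (A : ℕ → ℕ → ℝ) : TPBelow 0 A := by
  intro r ρ κ _ _ hK
  rcases r with _ | r
  · simp
  · exact absurd (hK 0) (Nat.not_lt_zero _)

theorem tpReal_of_forall_tpBelow {A : ℕ → ℕ → ℝ} (h : ∀ K, TPBelow K A) : TPReal A := by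
  intro r hr ρ κ hρ hκ
  rcases r with _ | r
  · omega
  · exact h (ρ (Fin.last r) + 1) _ ρ κ hρ hκ fun i =>
      Nat.lt_succ_of_le (hρ.monotone (Fin.le_last i))

theorem StrictMono.monotone_update_succ {ι : Type*} [PartialOrder ι] [DecidableEq ι] {κ : ι → ℕ}
    (hκ : StrictMono κ) (j : ι) : Monotone (Function.update κ j (κ j + 1)) := by
  intro a b hab
  rcases hab.eq_or_lt with rfl | hlt
  · exact le_rfl
  have := hκ hlt
  by_cases ha : a = j <;> by_cases hb : b = j <;>
    simp only [ha, hb, Function.update_self, ne_eq, not_false_eq_true, Function.update_of_ne]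
  · exact absurd (ha.trans hb.symm) hlt.ne
  · subst ha; omega
  · subst hb; omega
  · omega

theorem StrictMono.exists_eq_succ {r : ℕ} {ρ : Fin r → ℕ} (hρ : StrictMono ρ)
    (h : ∀ i, ρ i ≠ 0) : ∃ ρ' : Fin r → ℕ, StrictMono ρ' ∧ ρ = fun i => ρ' i + 1 :=
  ⟨fun i => ρ i - 1, fun a b hab => by dsimp only; have := hρ hab; have := h a; omega,
    funext fun i => by dsimp only; have := h i; omega⟩

namespace TPBelow

variable {K : ℕ} {A : ℕ → ℕ → ℝ}

/-- A non-injective column map gives two equal columns, hence a vanishing minor. -/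
theorem det_nonneg_of_monotone (hA : TPBelow K A) {r : ℕ} {ρ κ : Fin r → ℕ}
    (hρ : StrictMono ρ) (hκ : Monotone κ) (hK : ∀ i, ρ i < K) :
    0 ≤ (Matrix.of fun i j => A (ρ i) (κ j)).det := by
  by_cases hinj : Function.Injective κ
  · exact hA r ρ κ hρ (hκ.strictMono_of_injective hinj) hK
  · obtain ⟨i, j, hij, hne⟩ : ∃ i j, κ i = κ j ∧ i ≠ j := by
      simpa [Function.Injective] using hinj
    rw [Matrix.det_zero_of_column_eq hne fun k => by simp [hij]]

theorem combineCol (hA : TPBelow K A) {a b : ℝ} (ha : 0 ≤ a) (hb : 0 ≤ b) (q : ℕ) :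
    TPBelow K fun i k => if k = q then a * A i q + b * A i (q + 1) else A i k := by
  intro r ρ κ hρ hκ hK
  by_cases hq : ∃ j₀, κ j₀ = q
  · obtain ⟨j₀, rfl⟩ := hq
    set B : Matrix (Fin r) (Fin r) ℝ := Matrix.of fun i j => A (ρ i) (κ j) with hB
    have hcombo : (Matrix.of fun i j =>
          if κ j = κ j₀ then a * A (ρ i) (κ j₀) + b * A (ρ i) (κ j₀ + 1) else A (ρ i) (κ j)) =
        B.updateCol j₀ (a • (fun i => B i j₀) + b • fun i => A (ρ i) (κ j₀ + 1)) := by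
      ext i j
      by_cases hj : j = j₀
      · subst hj; simp [hB]
      · simp [hB, hj, hκ.injective.ne hj]
    have hshift : B.updateCol j₀ (fun i => A (ρ i) (κ j₀ + 1)) =
        Matrix.of fun i j => A (ρ i) (Function.update κ j₀ (κ j₀ + 1) j) := by
      ext i j
      by_cases hj : j = j₀
      · subst hj; simp
      · simp [hB, hj]
    rw [hcombo, Matrix.det_updateCol_add, Matrix.det_updateCol_smul, Matrix.det_updateCol_smul,
      Matrix.updateCol_eq_self, hshift]
    exact add_nonneg (mul_nonneg ha (hA r ρ κ hρ hκ hK))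
      (mul_nonneg hb (hA.det_nonneg_of_monotone hρ (hκ.monotone_update_succ j₀) hK))
  · push Not at hq
    simpa [hq] using hA r ρ κ hρ hκ hK

/-- The combination is performed one column at a time, left to right, each step reading a
column that has not been changed yet. -/
theorem combineCols (hA : TPBelow K A) {a b : ℝ} (ha : 0 ≤ a) (hb : 0 ≤ b) :
    TPBelow K fun i k => a * A i k + b * A i (k + 1) := by
  have upto : ∀ Q, TPBelow K fun i k => if k < Q then a * A i k + b * A i (k + 1) else A i k := by
    intro Q
    induction Q with
    | zero => simpa using hA
    | succ Q ih =>
      convert ih.combineCol ha hb Q using 3 with i k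
      rcases lt_trichotomy k Q with h | rfl | h
      · rw [if_pos (by omega), if_neg h.ne, if_pos h]
      · simp
      · rw [if_neg (by omega), if_neg h.ne', if_neg (by omega)]
  intro r ρ κ hρ hκ hK
  rcases r with _ | r
  · simp
  convert upto (κ (Fin.last r) + 1) _ ρ κ hρ hκ hK using 3
  funext i j
  dsimp only
  rw [if_pos (Nat.lt_succ_of_le (hκ.monotone (Fin.le_last j)))]

end TPBelow

/-- The block matrix `1 ⊕ M`. -/
def oneDirectSum (M : ℕ → ℕ → ℝ) : ℕ → ℕ → ℝ
  | 0, 0 => 1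
  | 0, _ + 1 => 0
  | _ + 1, 0 => 0
  | i + 1, j + 1 => M i j

theorem oneDirectSum_zero_left_of_ne_zero (M : ℕ → ℕ → ℝ) {j : ℕ} (hj : j ≠ 0) :
    oneDirectSum M 0 j = 0 := by
  obtain ⟨j, rfl⟩ := Nat.exists_eq_succ_of_ne_zero hj
  rfl

theorem oneDirectSum_zero_right_of_ne_zero (M : ℕ → ℕ → ℝ) {i : ℕ} (hi : i ≠ 0) :
    oneDirectSum M i 0 = 0 := by
  obtain ⟨i, rfl⟩ := Nat.exists_eq_succ_of_ne_zero hi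
  rfl

namespace TPBelow

variable {K : ℕ} {M : ℕ → ℕ → ℝ}

theorem det_oneDirectSum_nonneg_of_ne_zero (hM : TPBelow K M) {r : ℕ} {ρ κ : Fin r → ℕ}
    (hρ : StrictMono ρ) (hκ : StrictMono κ) (hK : ∀ i, ρ i < K + 1)
    (hρ0 : ∀ i, ρ i ≠ 0) (hκ0 : ∀ j, κ j ≠ 0) :
    0 ≤ (Matrix.of fun i j => oneDirectSum M (ρ i) (κ j)).det := by
  obtain ⟨ρ', hρ', rfl⟩ := hρ.exists_eq_succ hρ0
  obtain ⟨κ', hκ', rfl⟩ := hκ.exists_eq_succ hκ0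
  exact hM r ρ' κ' hρ' hκ' fun i => Nat.lt_of_succ_lt_succ (hK i)

theorem oneDirectSum (hM : TPBelow K M) : TPBelow (K + 1) (oneDirectSum M) := by
  intro r ρ κ hρ hκ hK
  rcases r with _ | r
  · simp
  have all_ne_zero {f : Fin (r + 1) → ℕ} (hf : StrictMono f) (h0 : f 0 ≠ 0) i : f i ≠ 0 :=
    fun h => h0 (Nat.eq_zero_of_le_zero (by simpa [h] using hf.monotone (Fin.zero_le i)))
  have succ_ne_zero {f : Fin (r + 1) → ℕ} (hf : StrictMono f) (i : Fin r) : f i.succ ≠ 0 :=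
    Nat.ne_zero_of_lt (hf (Fin.succ_pos i))
  by_cases hρ0 : ρ 0 = 0 <;> by_cases hκ0 : κ 0 = 0
  · -- expanding along the first row, only the `(0, 0)` entry survives
    rw [Matrix.det_succ_row_zero, Fin.sum_univ_succ, Finset.sum_eq_zero fun j _ => by
      simp [hρ0, oneDirectSum_zero_left_of_ne_zero M (succ_ne_zero hκ j)]]
    simpa [hρ0, hκ0, oneDirectSum.eq_1, Matrix.submatrix] using
      hM.det_oneDirectSum_nonneg_of_ne_zero (hρ.comp Fin.strictMono_succ)
        (hκ.comp Fin.strictMono_succ) (fun i => hK i.succ) (succ_ne_zero hρ) (succ_ne_zero hκ)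
  · rw [Matrix.det_eq_zero_of_row_eq_zero 0 fun j => by
      simp [hρ0, oneDirectSum_zero_left_of_ne_zero M (all_ne_zero hκ hκ0 j)]]
  · rw [Matrix.det_eq_zero_of_column_eq_zero 0 fun i => by
      simp [hκ0, oneDirectSum_zero_right_of_ne_zero M (all_ne_zero hρ hρ0 i)]]
  · exact hM.det_oneDirectSum_nonneg_of_ne_zero hρ hκ hK (all_ne_zero hρ hρ0)
      (all_ne_zero hκ hκ0)

end TPBelow

theorem tpBelow_identity (K : ℕ) : TPBelow K fun i j => if i = j then 1 else 0 := by
  induction K with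
  | zero => exact tpBelow_zero _
  | succ K ih =>
    convert ih.oneDirectSum using 1
    funext i j
    rcases i with _ | i <;> rcases j with _ | j <;> simp [oneDirectSum]

/-- The triangle whose `n`-th row has generating polynomial `∏ i < n, (x + c i)`. -/
noncomputable def stirling1Triangle (c : ℕ → ℝ) : ℕ → ℕ → ℝ
  | 0, 0 => 1
  | 0, _ + 1 => 0
  | n + 1, 0 => c n * stirling1Triangle c n 0
  | n + 1, k + 1 => stirling1Triangle c n k + c n * stirling1Triangle c n (k + 1)

theorem jacobiStirling1_eq_stirling1Triangle (z : ℝ) :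
    jacobiStirling1 z = stirling1Triangle fun m => (m : ℝ) * (m + z) := by
  funext n k
  induction n generalizing k with
  | zero => rcases k with _ | k <;> rfl
  | succ n ih =>
    rcases k with _ | k
    · rcases n with _ | n
      · simp [jacobiStirling1, stirling1Triangle]
      · rw [stirling1Triangle.eq_3, ← ih, jacobiStirling1.eq_3, jacobiStirling1.eq_3, mul_zero]
    · simp [jacobiStirling1, stirling1Triangle, ih]

/-- Peeling off the factor `x + c 0` of every row: `T_c = (1 ⊕ T_{c ∘ succ}) U`, with `U` the
upper bidiagonal matrix with diagonal `1` and superdiagonal `c 0`. -/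
theorem stirling1Triangle_eq_oneDirectSum (c : ℕ → ℝ) (n k : ℕ) :
    stirling1Triangle c n k =
      oneDirectSum (stirling1Triangle fun j => c (j + 1)) n k +
        c 0 * oneDirectSum (stirling1Triangle fun j => c (j + 1)) n (k + 1) := by
  induction n generalizing k with
  | zero => rcases k with _ | k <;> simp [stirling1Triangle, oneDirectSum]
  | succ n ih =>
    rcases n with _ | n
    · rcases k with _ | _ | k <;> simp [stirling1Triangle, oneDirectSum]
    rcases k with _ | k
    · rw [stirling1Triangle.eq_3, ih]
      simp only [oneDirectSum, stirling1Triangle]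
      ring
    · rw [stirling1Triangle.eq_4, ih k, ih (k + 1)]
      rcases k with _ | k <;> simp only [oneDirectSum, stirling1Triangle] <;> ring

theorem tpBelow_stirling1Triangle (K : ℕ) :
    ∀ c : ℕ → ℝ, (∀ j, 0 ≤ c j) → TPBelow K (stirling1Triangle c) := by
  induction K with
  | zero => exact fun c _ => tpBelow_zero _
  | succ K ih =>
    intro c hc
    have := (ih _ fun j => hc (j + 1)).oneDirectSum.combineCols zero_le_one (hc 0)
    simpa only [one_mul, ← stirling1Triangle_eq_oneDirectSum] using this

/-- Multiplying the `n`-th row polynomial by `x + c n`. -/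
theorem toeplitz_stirling1Triangle_succ (c : ℕ → ℝ) (n i k : ℕ) :
    toeplitz (stirling1Triangle c (n + 1)) i k =
      c n * toeplitz (stirling1Triangle c n) i k + toeplitz (stirling1Triangle c n) i (k + 1) := by
  simp only [toeplitz]
  rcases lt_trichotomy k i with h | rfl | h
  · obtain ⟨m, hm⟩ : ∃ m, i - k = m + 1 := ⟨i - k - 1, by omega⟩
    rw [if_pos h.le, if_pos h.le, if_pos (Nat.succ_le_of_lt h), hm, stirling1Triangle,
      show i - (k + 1) = m by omega]
    ring
  · simp [stirling1Triangle]
  · rw [if_neg (by omega), if_neg (by omega), if_neg (by omega), mul_zero, add_zero]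

theorem tpBelow_toeplitz_stirling1Triangle {c : ℕ → ℝ} (hc : ∀ j, 0 ≤ c j) (n K : ℕ) :
    TPBelow K (toeplitz (stirling1Triangle c n)) := by
  induction n with
  | zero =>
    convert tpBelow_identity K using 1
    funext i j
    rcases lt_trichotomy j i with h | rfl | h
    · obtain ⟨m, hm⟩ : ∃ m, i - j = m + 1 := ⟨i - j - 1, by omega⟩
      simp [toeplitz, h.le, hm, h.ne', stirling1Triangle]
    · simp [toeplitz, stirling1Triangle]
    · simp [toeplitz, h.not_ge, h.ne]
  | succ n ih =>
    have := ih.combineCols (hc n) zero_le_one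
    simpa only [one_mul, ← toeplitz_stirling1Triangle_succ] using this

/-- **Corollary (Jacobi-Stirling triangle of the first kind).**  For a real
number `z > -1`, the Jacobi-Stirling triangle of the first kind is totally
positive, and every row has a totally positive Toeplitz matrix. -/
theorem jacobiStirling1_totallyPositive (z : ℝ) (hz : -1 < z) :
    TPReal (jacobiStirling1 z) ∧
      ∀ n, TPReal (toeplitz fun k => jacobiStirling1 z n k) := by
  have hc : ∀ m : ℕ, 0 ≤ (m : ℝ) * (m + z) := by
    rintro (_ | m)
    · simp
    · exact mul_nonneg (by positivity) (by push_cast; linarith [m.cast_nonneg (α := ℝ)])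
  rw [jacobiStirling1_eq_stirling1Triangle]
  exact ⟨tpReal_of_forall_tpBelow fun K => tpBelow_stirling1Triangle K _ hc,
    fun n => tpReal_of_forall_tpBelow (tpBelow_toeplitz_stirling1Triangle hc n)⟩
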